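/- Let Γ = (G, σ) be a balanced signed graph on n vertices. Then, for every integer k with 1 ≤ k ≤ n−1, the k-token signed graph F_k(Γ) is also balanced. -/

import Mathlib

open scoped Classical

/-- A signed graph: a simple graph together with a signature assigning a sign `±1`
(an element of `ℤˣ`) to each pair of vertices (only the values on edges are relevant). -/
structure SignedGraph (V : Type*) where
  G : SimpleGraph V
  sign : V → V → ℤˣ
  sign_symm : ∀ u v, sign u v = sign v u

namespace SignedGraph

variable {V W : Type*}

/-- The sign function, as a function on unordered pairs. -/
def esign (Γ : SignedGraph V) : Sym2 V → ℤˣ :=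
  Sym2.lift ⟨Γ.sign, Γ.sign_symm⟩

/-- The sign of a walk: the product of the signs of its edges. -/
def walkSign (Γ : SignedGraph V) {u v : V} (p : Γ.G.Walk u v) : ℤˣ :=
  (p.edges.map Γ.esign).prod

/-- A signed graph is balanced if every cycle is positive. -/
def Balanced (Γ : SignedGraph V) : Prop :=
  ∀ ⦃u : V⦄ (p : Γ.G.Walk u u), p.IsCycle → Γ.walkSign p = 1

/-- Switching at a vertex subset `U`: reverse the sign of every edge with exactly one
endpoint in `U`. -/
noncomputable def switch (Γ : SignedGraph V) (U : Set V) : SignedGraph V where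
  G := Γ.G
  sign u v := (if u ∈ U then (-1 : ℤˣ) else 1) * (if v ∈ U then (-1 : ℤˣ) else 1) * Γ.sign u v
  sign_symm u v := by
    rw [Γ.sign_symm u v, mul_comm (if u ∈ U then (-1 : ℤˣ) else 1) (if v ∈ U then (-1 : ℤˣ) else 1)]

/-- Two signed graphs on the same vertex set are "the same signed graph" when they have the
same underlying graph and the same signature on every edge. -/
def SEq (Γ Γ' : SignedGraph V) : Prop :=
  Γ.G = Γ'.G ∧ ∀ u v, Γ.G.Adj u v → Γ.sign u v = Γ'.sign u v

/-- Switching equivalence of two signed graphs on the same vertex set. -/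
def SwitchEquiv (Γ Γ' : SignedGraph V) : Prop :=
  ∃ U : Set V, (Γ.switch U).SEq Γ'

/-- A sign-preserving isomorphism of signed graphs. -/
structure Iso (Γ : SignedGraph V) (Γ' : SignedGraph W) where
  toEquiv : V ≃ W
  adj_iff : ∀ u v, Γ.G.Adj u v ↔ Γ'.G.Adj (toEquiv u) (toEquiv v)
  sign_eq : ∀ u v, Γ.G.Adj u v → Γ.sign u v = Γ'.sign (toEquiv u) (toEquiv v)

/-- Switching isomorphism: `Γ'` is isomorphic to a switching of `Γ`. -/
def SwitchIso (Γ : SignedGraph V) (Γ' : SignedGraph W) : Prop :=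
  ∃ U : Set V, Nonempty ((Γ.switch U).Iso Γ')

/-- The negation of a signed graph: all edge signs reversed. -/
def neg (Γ : SignedGraph V) : SignedGraph V where
  G := Γ.G
  sign u v := -Γ.sign u v
  sign_symm u v := by rw [Γ.sign_symm]

variable [DecidableEq V]

/-- The underlying graph of the `k`-token graph: vertices are the `k`-subsets of `V`,
with `A ~ B` when `A Δ B = {a, b}`, `a ∈ A`, `b ∈ B` and `a ~ b` in `G`. -/
def tokenAdj (G : SimpleGraph V) (k : ℕ) : SimpleGraph {A : Finset V // A.card = k} where
  Adj A B := ∃ a b, a ∈ A.1 ∧ b ∈ B.1 ∧ G.Adj a b ∧ symmDiff A.1 B.1 = {a, b}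
  symm := by
    constructor
    rintro A B ⟨a, b, ha, hb, hab, hs⟩
    exact ⟨b, a, hb, ha, hab.symm, by rw [symmDiff_comm, hs, Finset.pair_comm]⟩
  loopless := by
    constructor
    rintro A ⟨a, b, ha, hb, hab, hs⟩
    rw [symmDiff_self] at hs
    have h : a ∈ ({a, b} : Finset V) := Finset.mem_insert_self a {b}
    rw [← hs] at h
    simp at h

/-- The `k`-token signed graph: the edge obtained by moving a token along `ab`
carries the sign of `ab`. -/
def token (Γ : SignedGraph V) (k : ℕ) : SignedGraph {A : Finset V // A.card = k} where
  G := tokenAdj Γ.G k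
  sign A B := ∏ a ∈ A.1 \ B.1, ∏ b ∈ B.1 \ A.1, Γ.sign a b
  sign_symm A B := by
    rw [Finset.prod_comm]
    exact Finset.prod_congr rfl fun b _ => Finset.prod_congr rfl fun a _ => Γ.sign_symm a b

/-- The signed adjacency matrix (over `ℝ`). -/
noncomputable def adjMatrix (Γ : SignedGraph V) [Fintype V] : Matrix V V ℝ :=
  Matrix.of fun u v => if Γ.G.Adj u v then ((Γ.sign u v : ℤ) : ℝ) else 0

/-- The signed Laplacian matrix `L = D - A` (over `ℝ`). -/
noncomputable def lapMatrix (Γ : SignedGraph V) [Fintype V] : Matrix V V ℝ :=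
  Matrix.diagonal (fun v => (Γ.G.degree v : ℝ)) - Γ.adjMatrix

/-- The quantity `ℓ_m(Γ)`. -/
noncomputable def ellm (Γ : SignedGraph V) [Fintype V] (m : ℕ) : ℝ :=
  (∑ r ∈ Finset.range (m + 1),
      ((Γ.G.adjMatrix ℝ ^ r).trace - (Γ.adjMatrix ^ r).trace)) /
  (∑ r ∈ Finset.range (m + 1),
      ((Γ.G.adjMatrix ℝ ^ r).trace + |(Γ.adjMatrix ^ r).trace|))

/-- The unbalance level `ℓ(Γ) = max {ℓ_{n-1}(Γ), ℓ_n(Γ)}`. -/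
noncomputable def unbalanceLevel (Γ : SignedGraph V) [Fintype V] : ℝ :=
  max (Γ.ellm (Fintype.card V - 1)) (Γ.ellm (Fintype.card V))

/-- The frustration index: the minimum number of negative edges whose deletion yields a
balanced signed graph. -/
noncomputable def frustrationIndex (Γ : SignedGraph V) : ℕ :=
  sInf {m : ℕ | ∃ F : Finset (Sym2 V), F.card = m ∧ ↑F ⊆ Γ.G.edgeSet ∧
    (∀ e ∈ F, Γ.esign e = -1) ∧
    Balanced ⟨Γ.G.deleteEdges ↑F, Γ.sign, Γ.sign_symm⟩}

/-- The signed complement of a balanced signed graph, with respect to a switching function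
`s` witnessing balance (`A_σ = S A S`): the signed graph on the complement graph with
adjacency matrix `S Ā S`, i.e. with sign `s u * s v` on each complement edge. -/
def scompl (Γ : SignedGraph V) (s : V → ℤˣ) : SignedGraph V where
  G := Γ.Gᶜ
  sign u v := s u * s v
  sign_symm u v := mul_comm _ _

/-- The real diagonal `±1` matrix associated with `s : V → ℤˣ`. -/
noncomputable def diagS [Fintype V] (s : V → ℤˣ) : Matrix V V ℝ :=
  Matrix.diagonal fun v => ((s v : ℤ) : ℝ)

end SignedGraph

/-- The all-positive signed complete graph on `V`. -/
def allPos (V : Type*) : SignedGraph V := ⟨⊤, fun _ _ => 1, fun _ _ => rfl⟩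

/-- The `(n; 1, k)`-binomial matrix. -/
noncomputable def binomB (V : Type*) [Fintype V] [DecidableEq V] (k : ℕ) :
    Matrix {A : Finset V // A.card = k} V ℝ :=
  Matrix.of fun A v => if v ∈ A.1 then 1 else 0

/-- The `(n; k₁, k₂)`-binomial matrix. -/
noncomputable def binomB2 (V : Type*) [Fintype V] [DecidableEq V] (k₁ k₂ : ℕ) :
    Matrix {A : Finset V // A.card = k₂} {A : Finset V // A.card = k₁} ℝ :=
  Matrix.of fun A X => if X.1 ⊆ A.1 then 1 else 0

/-
A signed graph is balanced exactly when its signature is switching-trivial, i.e. of the form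
`σ(uv) = s(u) s(v)` for some `s : V → {±1}`. Given balance, fix a root in every component and
let `s(v)` be the sign of any walk from the root to `v`. This is well defined because every
closed walk has sign `1`: its sign equals that of its bypass, a trivial path, since each detour
cut away is a positive cycle or an edge traversed back and forth. Moving a token from `a` to `b`
turns the `k`-set `A` into `B = A - a + b`, and `∏_{A} s · ∏_{B} s = s(a) s(b) = σ(ab)`; so
`A ↦ ∏_{v ∈ A} s(v)` trivialises the signature of `F_k(Γ)`.
-/

namespace Finset

variable {α : Type*} [DecidableEq α]

lemma sdiff_eq_singleton_of_symmDiff_eq_pair {A B : Finset α} {a b : α} (ha : a ∈ A)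
    (hb : b ∈ B) (h : symmDiff A B = {a, b}) : A \ B = {a} := by
  ext x
  have hx := congrArg (x ∈ ·) h
  simp only [mem_symmDiff, mem_insert, mem_singleton, eq_iff_iff] at hx
  simp only [mem_sdiff, mem_singleton]
  grind

lemma prod_mul_prod_eq_prod_sdiff_mul_prod_sdiff (f : α → ℤˣ) (A B : Finset α) :
    (∏ x ∈ A, f x) * ∏ x ∈ B, f x = (∏ x ∈ A \ B, f x) * ∏ x ∈ B \ A, f x := by
  simpa [div_eq_mul_inv, Int.units_inv_eq_self] using
    (prod_sdiff_div_prod_sdiff (s₁ := B) (s₂ := A) (f := f)).symm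

end Finset

open SimpleGraph

namespace SignedGraph

variable {V : Type*} {Γ : SignedGraph V} {u v w : V}

@[simp]
lemma walkSign_nil : Γ.walkSign (Walk.nil : Γ.G.Walk u u) = 1 := rfl

@[simp]
lemma walkSign_cons (h : Γ.G.Adj u v) (p : Γ.G.Walk v w) :
    Γ.walkSign (p.cons h) = Γ.sign u v * Γ.walkSign p := by
  simp [walkSign, esign]

@[simp]
lemma walkSign_append (p : Γ.G.Walk u v) (q : Γ.G.Walk v w) :
    Γ.walkSign (p.append q) = Γ.walkSign p * Γ.walkSign q := by
  simp [walkSign]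

@[simp]
lemma walkSign_reverse (p : Γ.G.Walk u v) : Γ.walkSign p.reverse = Γ.walkSign p := by
  simp [walkSign, List.prod_reverse]

@[simp]
lemma walkSign_copy {u' v' : V} (p : Γ.G.Walk u v) (hu : u = u') (hv : v = v') :
    Γ.walkSign (p.copy hu hv) = Γ.walkSign p := by
  subst hu hv
  rfl

lemma walkSign_eq_mul_of_sign_eq_mul (s : V → ℤˣ)
    (hs : ∀ u v, Γ.G.Adj u v → Γ.sign u v = s u * s v) (p : Γ.G.Walk u v) :
    Γ.walkSign p = s u * s v := by
  induction p with
  | nil => simp [Int.units_mul_self]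
  | @cons x y z h p ih =>
    rw [walkSign_cons, ih, hs x y h, mul_assoc, ← mul_assoc (s y), Int.units_mul_self, one_mul]

lemma balanced_of_sign_eq_mul (s : V → ℤˣ)
    (hs : ∀ u v, Γ.G.Adj u v → Γ.sign u v = s u * s v) : Γ.Balanced := fun u p _ => by
  rw [walkSign_eq_mul_of_sign_eq_mul s hs, Int.units_mul_self]

namespace Balanced

variable (hΓ : Γ.Balanced)
include hΓ

/-- The closed walk `u → v ⇝ u` is a cycle unless the path back is the edge `vu` itself. -/
lemma walkSign_cons_of_isPath (h : Γ.G.Adj u v) {q : Γ.G.Walk v u} (hq : q.IsPath) :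
    Γ.walkSign (q.cons h) = 1 := by
  by_cases he : s(u, v) ∈ q.edges
  · rw [hq.eq_adj_toWalk_of_mem_edges (Sym2.eq_swap ▸ he), Adj.toWalk, walkSign_cons,
      walkSign_cons, walkSign_nil, mul_one, Γ.sign_symm, Int.units_mul_self]
  · exact hΓ _ ((Walk.cons_isCycle_iff q h).2 ⟨hq, he⟩)

lemma walkSign_bypass [DecidableEq V] (p : Γ.G.Walk u v) :
    Γ.walkSign p.bypass = Γ.walkSign p := by
  induction p with
  | nil => rfl
  | @cons x y z h p ih =>
    rw [Walk.bypass]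
    split_ifs with hx
    · have hcycle := hΓ.walkSign_cons_of_isPath h (p.bypass_isPath.takeUntil hx)
      conv_rhs => rw [walkSign_cons, ← ih, ← p.bypass.take_spec hx, walkSign_append,
        ← mul_assoc, ← walkSign_cons h, hcycle, one_mul]
    · rw [walkSign_cons, walkSign_cons, ih]

lemma walkSign_eq_one_of_closed (p : Γ.G.Walk u u) : Γ.walkSign p = 1 := by
  classical
  rw [← hΓ.walkSign_bypass, Walk.eq_nil_iff_nil.2 (Walk.isPath_iff_nil.1 p.bypass_isPath),
    walkSign_nil]

lemma walkSign_eq (p q : Γ.G.Walk u v) : Γ.walkSign p = Γ.walkSign q := by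
  have h := hΓ.walkSign_eq_one_of_closed (p.append q.reverse)
  rwa [walkSign_append, walkSign_reverse, mul_eq_one_iff_eq_inv, Int.units_inv_eq_self] at h

lemma sign_eq_walkSign_mul_walkSign {r : V} (h : Γ.G.Adj u v) (pu : Γ.G.Walk r u)
    (pv : Γ.G.Walk r v) : Γ.sign u v = Γ.walkSign pu * Γ.walkSign pv := by
  simpa using hΓ.walkSign_eq (h.toWalk) (pu.reverse.append pv)

lemma exists_sign_eq_mul :
    ∃ s : V → ℤˣ, ∀ u v, Γ.G.Adj u v → Γ.sign u v = s u * s v := by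
  have root_reachable (v : V) : Γ.G.Reachable (Γ.G.connectedComponentMk v).out v :=
    ConnectedComponent.exact (Quot.out_eq _)
  refine ⟨fun v => Γ.walkSign (root_reachable v).some, fun u v h => ?_⟩
  have hroot : (Γ.G.connectedComponentMk u).out = (Γ.G.connectedComponentMk v).out := by
    rw [ConnectedComponent.sound h.reachable]
  rw [hΓ.sign_eq_walkSign_mul_walkSign h ((root_reachable u).some.copy hroot rfl)
    (root_reachable v).some, walkSign_copy]

end Balanced

lemma exists_sdiff_eq_singleton_of_tokenAdj [DecidableEq V] {G : SimpleGraph V} {k : ℕ}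
    {A B : {A : Finset V // A.card = k}} (hAB : (tokenAdj G k).Adj A B) :
    ∃ a b, G.Adj a b ∧ A.1 \ B.1 = {a} ∧ B.1 \ A.1 = {b} := by
  obtain ⟨a, b, ha, hb, hab, h⟩ := hAB
  refine ⟨a, b, hab, Finset.sdiff_eq_singleton_of_symmDiff_eq_pair ha hb h,
    Finset.sdiff_eq_singleton_of_symmDiff_eq_pair hb ha ?_⟩
  rw [symmDiff_comm, h, Finset.pair_comm]

end SignedGraph

theorem token_balanced_general {V : Type*} [DecidableEq V] (k : ℕ)
    (Γ : SignedGraph V) (hbal : Γ.Balanced) :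
    (Γ.token k).Balanced := by
  obtain ⟨s, hs⟩ := hbal.exists_sign_eq_mul
  refine SignedGraph.balanced_of_sign_eq_mul (fun A => ∏ v ∈ A.1, s v) fun A B hAB => ?_
  obtain ⟨a, b, hab, hA, hB⟩ := SignedGraph.exists_sdiff_eq_singleton_of_tokenAdj hAB
  calc (Γ.token k).sign A B = Γ.sign a b := by simp [SignedGraph.token, hA, hB]
    _ = (∏ v ∈ A.1 \ B.1, s v) * ∏ v ∈ B.1 \ A.1, s v := by simp [hA, hB, hs a b hab]
    _ = _ := (Finset.prod_mul_prod_eq_prod_sdiff_mul_prod_sdiff s A.1 B.1).symm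

/-- the `k`-token signed graph of a balanced signed graph is balanced. -/
theorem token_balanced {V : Type*} [Fintype V] [DecidableEq V] (n k : ℕ)
    (hn : Fintype.card V = n) (hk1 : 1 ≤ k) (hk2 : k ≤ n - 1)
    (Γ : SignedGraph V) (hbal : Γ.Balanced) :
    (Γ.token k).Balanced :=
  token_balanced_general k Γ hbal
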